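/- Proposition (wuc games, first part): In a weakly unilaterally competitive bimatrix game Γ, the leader's payoff at any subgame perfect equilibrium of the commitment game equals his commitment value, which equals his matrix game value: v_A = α^L = α^H. -/

import Mathlib

open Matrix

noncomputable section

/-- The set of mixed strategies: the standard simplex in `ℝ^m`. -/
def Simp (m : ℕ) : Set (Fin m → ℝ) := stdSimplex ℝ (Fin m)

/-- Bilinear payoff `xᵀ A y`. -/
def pay {m n : ℕ} (A : Matrix (Fin m) (Fin n) ℝ) (x : Fin m → ℝ) (y : Fin n → ℝ) : ℝ :=
  x ⬝ᵥ A.mulVec y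

/-- Payoff of a mixed strategy `x` against the pure strategy `j`: `α(x, e_j) = (xᵀA)_j`. -/
def purePay {m n : ℕ} (A : Matrix (Fin m) (Fin n) ℝ) (x : Fin m → ℝ) (j : Fin n) : ℝ :=
  Matrix.vecMul x A j

/-- Pure best replies of player II against `x`. -/
def BRII {m n : ℕ} (B : Matrix (Fin m) (Fin n) ℝ) (x : Fin m → ℝ) : Set (Fin n) :=
  {j | ∀ k, purePay B x k ≤ purePay B x j}

/-- Best-reply region `X(j)` of column `j`. -/
def XReg {m n : ℕ} (B : Matrix (Fin m) (Fin n) ℝ) (j : Fin n) : Set (Fin m → ℝ) :=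
  {x ∈ Simp m | j ∈ BRII B x}

/-- `D`: columns whose best-reply region has a fully mixed point. -/
def Dset {m n : ℕ} (B : Matrix (Fin m) (Fin n) ℝ) : Set (Fin n) :=
  {j | ∃ x ∈ XReg B j, ∀ i, 0 < x i}

/-- `E(j)`: columns of `B` payoff-equivalent to column `j`. -/
def Ecols {m n : ℕ} (B : Matrix (Fin m) (Fin n) ℝ) (j : Fin n) : Set (Fin n) :=
  {k | ∀ i, B i k = B i j}

/-- `min_j α(x, e_j)`. -/
def minPure {m n : ℕ} (A : Matrix (Fin m) (Fin n) ℝ) (x : Fin m → ℝ) : ℝ :=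
  sInf {w | ∃ j, w = purePay A x j}

/-- `max_j α(x, e_j)`. -/
def maxPure {m n : ℕ} (A : Matrix (Fin m) (Fin n) ℝ) (x : Fin m → ℝ) : ℝ :=
  sSup {w | ∃ j, w = purePay A x j}

/-- `max_{j ∈ BR_II(x)} α(x, e_j)`. -/
def maxBR {m n : ℕ} (A B : Matrix (Fin m) (Fin n) ℝ) (x : Fin m → ℝ) : ℝ :=
  sSup {w | ∃ j ∈ BRII B x, w = purePay A x j}

/-- Matrix game value `v_A = max_{x ∈ X} min_j α(x, e_j)`. -/
def matVal {m n : ℕ} (A : Matrix (Fin m) (Fin n) ℝ) : ℝ :=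
  sSup {v | ∃ x ∈ Simp m, v = minPure A x}

/-- `min_{k ∈ E(j)} α(x, e_k)`. -/
def minE {m n : ℕ} (A B : Matrix (Fin m) (Fin n) ℝ) (j : Fin n) (x : Fin m → ℝ) : ℝ :=
  sInf {w | ∃ k ∈ Ecols B j, w = purePay A x k}

/-- Commitment value `α^L = max_{j∈D} max_{x∈X(j)} min_{k∈E(j)} α(x,e_k)`. -/
def alphaL {m n : ℕ} (A B : Matrix (Fin m) (Fin n) ℝ) : ℝ :=
  sSup {v | ∃ j ∈ Dset B, ∃ x ∈ XReg B j, v = minE A B j x}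

/-- Highest leader payoff `α^H = max_{j : X(j)≠∅} max_{x∈X(j)} α(x,e_j)`. -/
def alphaH {m n : ℕ} (A B : Matrix (Fin m) (Fin n) ℝ) : ℝ :=
  sSup {v | ∃ j, ∃ x ∈ XReg B j, v = purePay A x j}

/-- Commitment optimal strategies of the leader (player I). -/
def XLset {m n : ℕ} (A B : Matrix (Fin m) (Fin n) ℝ) : Set (Fin m → ℝ) :=
  {x | ∃ j ∈ Dset B, x ∈ XReg B j ∧ minE A B j x = alphaL A B}

/-- Non-degeneracy for player I: no mixed strategy of player I has more pure best
replies (among player II's pure strategies) than the size of its support. -/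
def NondegFor {m n : ℕ} (B : Matrix (Fin m) (Fin n) ℝ) : Prop :=
  ∀ x ∈ Simp m, (BRII B x).ncard ≤ {i | x i ≠ 0}.ncard

/-- Nash equilibrium of the bimatrix game `(A,B)`. -/
def isNE {m n : ℕ} (A B : Matrix (Fin m) (Fin n) ℝ) (x : Fin m → ℝ) (y : Fin n → ℝ) : Prop :=
  x ∈ Simp m ∧ y ∈ Simp n ∧
  (∀ x' ∈ Simp m, pay A x' y ≤ pay A x y) ∧
  (∀ y' ∈ Simp n, pay B x y' ≤ pay B x y)

/-- Strategies of player I appearing in some Nash equilibrium. -/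
def NEX {m n : ℕ} (A B : Matrix (Fin m) (Fin n) ℝ) : Set (Fin m → ℝ) :=
  {x | ∃ y, isNE A B x y}

/-- Strategies of player II appearing in some Nash equilibrium. -/
def NEY {m n : ℕ} (A B : Matrix (Fin m) (Fin n) ℝ) : Set (Fin n → ℝ) :=
  {y | ∃ x, isNE A B x y}

/-- Weakly unilaterally competitive bimatrix game. -/
def WUC {m n : ℕ} (A B : Matrix (Fin m) (Fin n) ℝ) : Prop :=
  (∀ x₁ ∈ Simp m, ∀ x₂ ∈ Simp m, ∀ y ∈ Simp n,
    (pay A x₁ y > pay A x₂ y → pay B x₁ y ≤ pay B x₂ y) ∧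
    (pay A x₁ y = pay A x₂ y → pay B x₁ y = pay B x₂ y)) ∧
  (∀ y₁ ∈ Simp n, ∀ y₂ ∈ Simp n, ∀ x ∈ Simp m,
    (pay B x y₁ > pay B x y₂ → pay A x y₁ ≤ pay A x y₂) ∧
    (pay B x y₁ = pay B x y₂ → pay A x y₁ = pay A x y₂))

/-!
In a wuc game, comparing the pure strategies `e_j`, `e_k` of player II shows that a best reply
`j` of player II to `x` is, among all columns, the worst one for player I at `x`. Hence every
leader payoff `α(x, e_j)` with `x ∈ X(j)` is at most `min_k α(x, e_k) ≤ v_A`, i.e. `α^H ≤ v_A`;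
and `α^L ≤ α^H` since a minimum over `E(j) ∋ j` is at most the value at `j`.
For `v_A ≤ α^L`, move a strategy `x` slightly towards the uniform strategy: the perturbed strategy
is fully mixed, so its best replies lie in `D`, and by concavity of `x ↦ min_k α(x, e_k)` its
guaranteed payoff tends to that of `x`.
-/

open Filter Topology

lemma le_of_forall_one_sub_mul_add_mul_le {a b c : ℝ}
    (h : ∀ ε ∈ Set.Ioc (0 : ℝ) 1, (1 - ε) * a + ε * b ≤ c) : a ≤ c := by
  have hlim : Tendsto (fun ε : ℝ => (1 - ε) * a + ε * b) (𝓝[>] 0) (𝓝 a) := by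
    have hcont : Continuous (fun ε : ℝ => (1 - ε) * a + ε * b) := by fun_prop
    simpa using (hcont.tendsto 0).mono_left nhdsWithin_le_nhds
  exact le_of_tendsto hlim (eventually_of_mem (Ioc_mem_nhdsGT one_pos) h)

section Payoffs

variable {m n : ℕ} (A B : Matrix (Fin m) (Fin n) ℝ)

lemma pay_single (x : Fin m → ℝ) (j : Fin n) : pay A x (Pi.single j 1) = purePay A x j := by
  rw [pay, dotProduct_mulVec, dotProduct_single_one, purePay]

lemma purePay_add (x y : Fin m → ℝ) (j : Fin n) :
    purePay A (x + y) j = purePay A x j + purePay A y j := by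
  simp only [purePay, add_vecMul, Pi.add_apply]

lemma purePay_smul (a : ℝ) (x : Fin m → ℝ) (j : Fin n) :
    purePay A (a • x) j = a * purePay A x j := by
  simp only [purePay, smul_vecMul, Pi.smul_apply, smul_eq_mul]

lemma exists_forall_purePay_le : ∃ M, ∀ x ∈ Simp m, ∀ j, purePay A x j ≤ M := by
  obtain ⟨M, hM⟩ := Finite.exists_le (Function.uncurry A)
  refine ⟨M, fun x hx j => ?_⟩
  calc purePay A x j = ∑ i, x i * A i j := by simp [purePay, vecMul, dotProduct]
    _ ≤ ∑ i, x i * M := by gcongr with i; exacts [hx.1 i, hM (i, j)]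
    _ = M := by rw [← Finset.sum_mul, hx.2, one_mul]

lemma exists_pos_mem_Simp [Nonempty (Fin m)] : ∃ u ∈ Simp m, ∀ i, 0 < u i := by
  have hm : (m : ℝ) ≠ 0 := Nat.cast_ne_zero.mpr (Fin.pos_iff_nonempty.mpr ‹_›).ne'
  refine ⟨fun _ => (m : ℝ)⁻¹, ⟨fun _ => by positivity, ?_⟩, fun _ => by positivity⟩
  simp [hm]

lemma BRII_nonempty [Nonempty (Fin n)] (x : Fin m → ℝ) : (BRII B x).Nonempty :=
  Finite.exists_max (purePay B x)

lemma minPure_eq_iInf (x : Fin m → ℝ) : minPure A x = ⨅ j, purePay A x j := by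
  simp only [minPure, iInf, Set.range, eq_comm]

lemma minPure_le (x : Fin m → ℝ) (j : Fin n) : minPure A x ≤ purePay A x j := by
  rw [minPure_eq_iInf]
  exact ciInf_le (Set.finite_range _).bddBelow j

lemma le_minPure [Nonempty (Fin n)] {x : Fin m → ℝ} {c : ℝ} (h : ∀ j, c ≤ purePay A x j) :
    c ≤ minPure A x := by
  rw [minPure_eq_iInf]
  exact le_ciInf h

lemma concaveOn_minPure [Nonempty (Fin n)] : ConcaveOn ℝ Set.univ (minPure A) := by
  refine ⟨convex_univ, fun x _ y _ a b ha hb _ => le_minPure A fun j => ?_⟩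
  rw [purePay_add, purePay_smul, purePay_smul, smul_eq_mul, smul_eq_mul]
  gcongr <;> apply minPure_le

lemma minE_le (j : Fin n) (x : Fin m → ℝ) : minE A B j x ≤ purePay A x j := by
  refine csInf_le ((Set.finite_range (purePay A x)).subset ?_).bddBelow ⟨j, fun _ => rfl, rfl⟩
  rintro _ ⟨k, -, rfl⟩
  exact ⟨k, rfl⟩

lemma minPure_le_minE (j : Fin n) (x : Fin m → ℝ) : minPure A x ≤ minE A B j x := by
  refine le_csInf ⟨_, j, fun _ => rfl, rfl⟩ ?_
  rintro _ ⟨k, -, rfl⟩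
  exact minPure_le A x k

lemma le_matVal [Nonempty (Fin n)] {x : Fin m → ℝ} (hx : x ∈ Simp m) :
    minPure A x ≤ matVal A := by
  obtain ⟨M, hM⟩ := exists_forall_purePay_le A
  have hbdd : BddAbove {v | ∃ x ∈ Simp m, v = minPure A x} := by
    refine ⟨M, ?_⟩
    rintro _ ⟨x, hx, rfl⟩
    exact (minPure_le A x (Classical.arbitrary _)).trans (hM x hx _)
  exact le_csSup hbdd ⟨x, hx, rfl⟩

lemma matVal_le [Nonempty (Fin m)] {c : ℝ} (h : ∀ x ∈ Simp m, minPure A x ≤ c) :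
    matVal A ≤ c := by
  obtain ⟨u, hu, -⟩ := exists_pos_mem_Simp (m := m)
  refine csSup_le ⟨_, u, hu, rfl⟩ ?_
  rintro _ ⟨x, hx, rfl⟩
  exact h x hx

lemma le_alphaL {j : Fin n} (hj : j ∈ Dset B) {x : Fin m → ℝ} (hx : x ∈ XReg B j) :
    minE A B j x ≤ alphaL A B := by
  obtain ⟨M, hM⟩ := exists_forall_purePay_le A
  have hbdd : BddAbove {v | ∃ j ∈ Dset B, ∃ x ∈ XReg B j, v = minE A B j x} := by
    refine ⟨M, ?_⟩
    rintro _ ⟨j, -, x, hx, rfl⟩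
    exact (minE_le A B j x).trans (hM x hx.1 j)
  exact le_csSup hbdd ⟨j, hj, x, hx, rfl⟩

lemma alphaL_le [Nonempty (Fin m)] [Nonempty (Fin n)] {c : ℝ}
    (h : ∀ j ∈ Dset B, ∀ x ∈ XReg B j, minE A B j x ≤ c) : alphaL A B ≤ c := by
  obtain ⟨u, hu, hpos⟩ := exists_pos_mem_Simp (m := m)
  obtain ⟨j, hj⟩ := BRII_nonempty B u
  refine csSup_le ⟨_, j, ⟨u, ⟨hu, hj⟩, hpos⟩, u, ⟨hu, hj⟩, rfl⟩ ?_
  rintro _ ⟨j, hjD, x, hx, rfl⟩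
  exact h j hjD x hx

lemma le_alphaH {j : Fin n} {x : Fin m → ℝ} (hx : x ∈ XReg B j) :
    purePay A x j ≤ alphaH A B := by
  obtain ⟨M, hM⟩ := exists_forall_purePay_le A
  have hbdd : BddAbove {v | ∃ j, ∃ x ∈ XReg B j, v = purePay A x j} := by
    refine ⟨M, ?_⟩
    rintro _ ⟨j, x, hx, rfl⟩
    exact hM x hx.1 j
  exact le_csSup hbdd ⟨j, x, hx, rfl⟩

lemma alphaH_le [Nonempty (Fin m)] [Nonempty (Fin n)] {c : ℝ}
    (h : ∀ j, ∀ x ∈ XReg B j, purePay A x j ≤ c) : alphaH A B ≤ c := by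
  obtain ⟨u, hu, -⟩ := exists_pos_mem_Simp (m := m)
  obtain ⟨j, hj⟩ := BRII_nonempty B u
  refine csSup_le ⟨_, j, u, ⟨hu, hj⟩, rfl⟩ ?_
  rintro _ ⟨j, x, hx, rfl⟩
  exact h j x hx

lemma alphaL_le_alphaH [Nonempty (Fin m)] [Nonempty (Fin n)] : alphaL A B ≤ alphaH A B :=
  alphaL_le A B fun j _ x hx => (minE_le A B j x).trans (le_alphaH A B hx)

lemma matVal_le_alphaL [Nonempty (Fin m)] [Nonempty (Fin n)] : matVal A ≤ alphaL A B := by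
  obtain ⟨u, hu, hpos⟩ := exists_pos_mem_Simp (m := m)
  refine matVal_le A fun x hx =>
    le_of_forall_one_sub_mul_add_mul_le (b := minPure A u) fun ε ⟨hε0, hε1⟩ => ?_
  set xε := (1 - ε) • x + ε • u
  have hxε : xε ∈ Simp m := convex_stdSimplex ℝ (Fin m) hx hu (by linarith) hε0.le (by ring)
  have hxε_pos : ∀ i, 0 < xε i := fun i =>
    add_pos_of_nonneg_of_pos (mul_nonneg (by linarith) (hx.1 i)) (mul_pos hε0 (hpos i))
  obtain ⟨j, hj⟩ := BRII_nonempty B xε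
  calc (1 - ε) * minPure A x + ε * minPure A u
      ≤ minPure A xε := (concaveOn_minPure A).2 trivial trivial (by linarith) hε0.le (by ring)
    _ ≤ minE A B j xε := minPure_le_minE A B j xε
    _ ≤ alphaL A B := le_alphaL A B ⟨xε, ⟨hxε, hj⟩, hxε_pos⟩ ⟨hxε, hj⟩

end Payoffs

namespace WUC

variable {m n : ℕ} {A B : Matrix (Fin m) (Fin n) ℝ}

lemma purePay_le_of_mem_BRII (hwuc : WUC A B) {x : Fin m → ℝ} (hx : x ∈ Simp m) {j : Fin n}
    (hj : j ∈ BRII B x) (k : Fin n) : purePay A x j ≤ purePay A x k := by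
  have h := hwuc.2 _ (single_mem_stdSimplex ℝ j) _ (single_mem_stdSimplex ℝ k) x hx
  simp only [pay_single] at h
  rcases (hj k).lt_or_eq with hlt | heq
  exacts [h.1 hlt, (h.2 heq.symm).le]

lemma alphaH_le_matVal [Nonempty (Fin m)] [Nonempty (Fin n)] (hwuc : WUC A B) :
    alphaH A B ≤ matVal A :=
  alphaH_le A B fun _ _ hx =>
    (le_minPure A (hwuc.purePay_le_of_mem_BRII hx.1 hx.2)).trans (le_matVal A hx.1)

end WUC

/-! With no rows or no columns the sets defining the three values are empty, or `{sInf ∅}`;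
Lean's junk value `sSup ∅ = sInf ∅ = 0` makes all three values `0`. -/

section Degenerate

variable {m n : ℕ} (A B : Matrix (Fin m) (Fin n) ℝ)

lemma Simp_eq_empty [IsEmpty (Fin m)] : Simp m = ∅ := stdSimplex_of_isEmpty_index ℝ (Fin m)

lemma matVal_eq_zero (h : IsEmpty (Fin m) ∨ IsEmpty (Fin n)) : matVal A = 0 := by
  have hzero : ∀ v ∈ {v | ∃ x ∈ Simp m, v = minPure A x}, v = 0 := by
    rintro _ ⟨x, hx, rfl⟩
    rcases h with hm | hn
    · exact (Simp_eq_empty.subset hx).elim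
    · rw [minPure_eq_iInf, Real.iInf_of_isEmpty]
  exact le_antisymm (Real.sSup_nonpos fun v hv => (hzero v hv).le)
    (Real.sSup_nonneg fun v hv => (hzero v hv).ge)

lemma alphaL_eq_zero (h : IsEmpty (Fin m) ∨ IsEmpty (Fin n)) : alphaL A B = 0 := by
  refine (congrArg sSup (Set.eq_empty_of_forall_notMem ?_)).trans Real.sSup_empty
  rintro _ ⟨j, -, x, hx, -⟩
  rcases h with hm | hn
  · exact Simp_eq_empty.subset hx.1
  · exact hn.elim j

lemma alphaH_eq_zero (h : IsEmpty (Fin m) ∨ IsEmpty (Fin n)) : alphaH A B = 0 := by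
  refine (congrArg sSup (Set.eq_empty_of_forall_notMem ?_)).trans Real.sSup_empty
  rintro _ ⟨j, x, hx, -⟩
  rcases h with hm | hn
  · exact Simp_eq_empty.subset hx.1
  · exact hn.elim j

end Degenerate

/-- in a weakly unilaterally competitive game, the leader's payoff at any
subgame perfect equilibrium equals his commitment value, which equals his matrix game
value: `v_A = α^L = α^H`. -/
theorem stmt8 {m n : ℕ} (A B : Matrix (Fin m) (Fin n) ℝ) (hwuc : WUC A B) :
    matVal A = alphaL A B ∧ alphaL A B = alphaH A B := by
  by_cases h : Nonempty (Fin m) ∧ Nonempty (Fin n)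
  · obtain ⟨_, _⟩ := h
    have hVL := matVal_le_alphaL A B
    have hLH := alphaL_le_alphaH A B
    have hHV := hwuc.alphaH_le_matVal
    exact ⟨hVL.antisymm (hLH.trans hHV), hLH.antisymm (hHV.trans hVL)⟩
  · rw [not_and_or, not_nonempty_iff, not_nonempty_iff] at h
    rw [matVal_eq_zero A h, alphaL_eq_zero A B h, alphaH_eq_zero A B h]
    exact ⟨rfl, rfl⟩
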